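/- Let T and S be A-positive operators on H (i.e., AT ≥ 0 and AS ≥ 0). Then the 𝔸-numerical radius of the off-diagonal matrix [[0, T],[S, 0]] on H⊕H equals (1/2)‖T + S‖_A. -/

import Mathlib

open ContinuousLinearMap

/-- The `A`-seminorm of a vector: `‖x‖_A = √⟨Ax, x⟩`. -/
noncomputable def vnormA {H : Type*} [NormedAddCommGroup H] [InnerProductSpace ℂ H]
    (A : H →L[ℂ] H) (x : H) : ℝ :=
  Real.sqrt (RCLike.re (inner ℂ (A x) x : ℂ))

/-- `T` is `A`-bounded, i.e. `T ∈ B_{A^{1/2}}(H)`. -/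
def ABounded {H : Type*} [NormedAddCommGroup H] [InnerProductSpace ℂ H]
    (A T : H →L[ℂ] H) : Prop :=
  ∃ c : ℝ, 0 < c ∧ ∀ x, vnormA A (T x) ≤ c * vnormA A x

/-- The `A`-operator seminorm `‖T‖_A = sup{‖Tx‖_A : ‖x‖_A = 1}`. -/
noncomputable def opNormA {H : Type*} [NormedAddCommGroup H] [InnerProductSpace ℂ H]
    (A T : H →L[ℂ] H) : ℝ :=
  sSup {c : ℝ | ∃ x : H, vnormA A x = 1 ∧ c = vnormA A (T x)}

/-- The `A`-numerical radius `ω_A(T) = sup{|⟨ATx, x⟩| : ‖x‖_A = 1}`. -/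
noncomputable def wA {H : Type*} [NormedAddCommGroup H] [InnerProductSpace ℂ H]
    (A T : H →L[ℂ] H) : ℝ :=
  sSup {c : ℝ | ∃ x : H, vnormA A x = 1 ∧ c = ‖(inner ℂ (A (T x)) x : ℂ)‖}

/-- `Ts` is the reduced (Douglas) solution of `AX = T*A`, i.e. `Ts = T^{♯_A}`. -/
def IsReducedAdjoint {H : Type*} [NormedAddCommGroup H] [InnerProductSpace ℂ H]
    [CompleteSpace H] (A T Ts : H →L[ℂ] H) : Prop :=
  A ∘L Ts = (ContinuousLinearMap.adjoint T) ∘L A ∧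
    ∀ y, Ts y ∈ closure (Set.range A)

/-- The `2 × 2` operator matrix `[[P, Q], [R, S]]` acting on `H ⊕ H` (with the `ℓ²` product
inner product). -/
noncomputable def blk {H : Type*} [NormedAddCommGroup H] [InnerProductSpace ℂ H]
    (P Q R S : H →L[ℂ] H) : WithLp 2 (H × H) →L[ℂ] WithLp 2 (H × H) :=
  letI e := (WithLp.prodContinuousLinearEquiv 2 ℂ H H)
  (e.symm.toContinuousLinearMap) ∘L
    ((P.comp (fst ℂ H H) + Q.comp (snd ℂ H H)).prod
      (R.comp (fst ℂ H H) + S.comp (snd ℂ H H))) ∘L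
    (e.toContinuousLinearMap)

/-- `𝔸 = diag(A, A)` on `H ⊕ H`. -/
noncomputable def AA {H : Type*} [NormedAddCommGroup H] [InnerProductSpace ℂ H]
    (A : H →L[ℂ] H) : WithLp 2 (H × H) →L[ℂ] WithLp 2 (H × H) :=
  blk A 0 0 A

/-! For `x = (u, v)` with `‖u‖_A² + ‖v‖_A² = 1`, Cauchy–Schwarz for the semi-inner products
`⟨AT·, ·⟩` and `⟨AS·, ·⟩`, followed by Cauchy–Schwarz in `ℝ²`, gives
`|⟨ATv, u⟩ + ⟨ASu, v⟩| ≤ √⟨A(T+S)v, v⟩ √⟨A(T+S)u, u⟩ ≤ ‖T+S‖_A ‖u‖_A ‖v‖_A ≤ ½ ‖T+S‖_A`.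
Conversely, `AS` being symmetric, `Re (⟨ATy, u⟩ + ⟨ASu, y⟩) = Re ⟨A(T+S)y, u⟩`, which is
`‖(T+S)y‖_A` for `u = (T+S)y / ‖(T+S)y‖_A`; so `(u, y)/√2` has `𝔸`-numerical value at least
`½ ‖(T+S)y‖_A`. Both estimates are comparisons of upper bounds, so they give the identity of
suprema even without knowing that `‖T+S‖_A` is finite. -/

open RCLike
open scoped InnerProductSpace

theorem Real.sSup_eq_mul_sSup_of_forall_exists_le {s t : Set ℝ} {a : ℝ} (ha : 0 < a)
    (hs : ∀ x ∈ s, 0 ≤ x) (ht : ∀ y ∈ t, 0 ≤ y)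
    (hst : ∀ M, 0 ≤ M → M ∈ upperBounds t → a * M ∈ upperBounds s)
    (hts : ∀ y ∈ t, ∃ x ∈ s, a * y ≤ x) :
    sSup s = a * sSup t := by
  by_cases hbt : BddAbove t
  · have hst' := hst _ (Real.sSup_nonneg ht) fun _ hy => le_csSup hbt hy
    have hbs : BddAbove s := ⟨_, hst'⟩
    refine le_antisymm (Real.sSup_le hst' (by positivity [Real.sSup_nonneg ht])) ?_
    rw [← smul_eq_mul, ← Real.sSup_smul_of_nonneg ha.le]
    refine Real.sSup_le ?_ (Real.sSup_nonneg hs)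
    rintro _ ⟨y, hy, rfl⟩
    obtain ⟨x, hx, hyx⟩ := hts y hy
    exact hyx.trans (le_csSup hbs hx)
  · have hbs : ¬BddAbove s := by
      rintro ⟨M, hM⟩
      refine hbt ⟨M / a, fun y hy => ?_⟩
      obtain ⟨x, hx, hyx⟩ := hts y hy
      rw [le_div_iff₀' ha]
      exact hyx.trans (hM hx)
    rw [Real.sSup_of_not_bddAbove hbs, Real.sSup_of_not_bddAbove hbt, mul_zero]

theorem Real.sqrt_mul_sqrt_add_sqrt_mul_sqrt_le {a b c d : ℝ} (ha : 0 ≤ a) (hb : 0 ≤ b)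
    (hc : 0 ≤ c) (hd : 0 ≤ d) : √a * √b + √c * √d ≤ √(a + c) * √(b + d) := by
  simpa [Fin.sum_univ_two, Fin.forall_fin_two, ha, hb, hc, hd] using
    Real.sum_sqrt_mul_sqrt_le Finset.univ (f := ![a, c]) (g := ![b, d])

theorem ContinuousLinearMap.IsPositive.norm_inner_le_sqrt_mul_sqrt {𝕜 E : Type*} [RCLike 𝕜]
    [NormedAddCommGroup E] [InnerProductSpace 𝕜 E] {P : E →L[𝕜] E} (hP : P.IsPositive)
    (x y : E) :
    ‖⟪P x, y⟫_𝕜‖ ≤ √(re ⟪P x, x⟫_𝕜) * √(re ⟪P y, y⟫_𝕜) := by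
  let _ : PreInnerProductSpace.Core 𝕜 E :=
    { inner := fun u v => ⟪P u, v⟫_𝕜
      conj_inner_symm := fun u v => by rw [inner_conj_symm, hP.inner_left_eq_inner_right]
      re_inner_nonneg := hP.re_inner_nonneg_left
      add_left := fun u v w => by rw [map_add, inner_add_left]
      smul_left := fun u v r => by rw [map_smul, inner_smul_left] }
  have hCS := InnerProductSpace.Core.inner_mul_inner_self_le (𝕜 := 𝕜) x y
  have hsymm : ‖⟪P y, x⟫_𝕜‖ = ‖⟪P x, y⟫_𝕜‖ := by
    rw [hP.inner_left_eq_inner_right, norm_inner_symm]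
  rw [← Real.sqrt_mul (hP.re_inner_nonneg_left x)]
  exact Real.le_sqrt_of_sq_le (by rw [sq]; exact hsymm ▸ hCS)

section vnormA

variable {H : Type*} [NormedAddCommGroup H] [InnerProductSpace ℂ H] {A : H →L[ℂ] H}

theorem vnormA_nonneg (A : H →L[ℂ] H) (x : H) : 0 ≤ vnormA A x := Real.sqrt_nonneg _

theorem vnormA_sq (hA : A.IsPositive) (x : H) : vnormA A x ^ 2 = re ⟪A x, x⟫_ℂ :=
  Real.sq_sqrt (hA.re_inner_nonneg_left x)

theorem vnormA_smul (A : H →L[ℂ] H) (c : ℂ) (x : H) :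
    vnormA A (c • x) = ‖c‖ * vnormA A x := by
  have h : ⟪A (c • x), c • x⟫_ℂ = ((‖c‖ ^ 2 : ℝ) : ℂ) * ⟪A x, x⟫_ℂ := by
    rw [map_smul, inner_smul_left, inner_smul_right, ← mul_assoc, RCLike.conj_mul]
    norm_cast
  rw [vnormA, vnormA, h, re_to_complex, Complex.re_ofReal_mul, Real.sqrt_mul (sq_nonneg _),
    Real.sqrt_sq (norm_nonneg _), re_to_complex]

theorem vnormA_ofReal_smul (A : H →L[ℂ] H) (r : ℝ) (x : H) :
    vnormA A ((r : ℂ) • x) = |r| * vnormA A x := by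
  rw [vnormA_smul, Complex.norm_real, Real.norm_eq_abs]

theorem vnormA_inv_smul_self {x : H} (hx : vnormA A x ≠ 0) :
    vnormA A ((((vnormA A x)⁻¹ : ℝ) : ℂ) • x) = 1 := by
  rw [vnormA_ofReal_smul, abs_inv, abs_of_nonneg (vnormA_nonneg A x), inv_mul_cancel₀ hx]

theorem norm_inner_le_vnormA_mul_vnormA (hA : A.IsPositive) (x y : H) :
    ‖⟪A x, y⟫_ℂ‖ ≤ vnormA A x * vnormA A y :=
  hA.norm_inner_le_sqrt_mul_sqrt x y

theorem re_inner_le_mul_vnormA_sq_of_forall (hA : A.IsPositive) {R : H →L[ℂ] H} {M : ℝ}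
    (hM : ∀ y, vnormA A y = 1 → vnormA A (R y) ≤ M) (x : H) :
    re ⟪A (R x), x⟫_ℂ ≤ M * vnormA A x ^ 2 := by
  refine (re_le_norm _).trans ((norm_inner_le_vnormA_mul_vnormA hA _ _).trans ?_)
  rcases eq_or_ne (vnormA A x) 0 with hx | hx
  · simp [hx]
  · have hRx : vnormA A (R x) ≤ vnormA A x * M := by
      have hunit := hM _ (vnormA_inv_smul_self hx)
      rwa [map_smul, vnormA_ofReal_smul, abs_inv, abs_of_nonneg (vnormA_nonneg A x),
        inv_mul_le_iff₀ ((vnormA_nonneg A x).lt_of_ne' hx)] at hunit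
    calc _ ≤ vnormA A x * M * vnormA A x := mul_le_mul_of_nonneg_right hRx (vnormA_nonneg A x)
      _ = M * vnormA A x ^ 2 := by ring

end vnormA

section offDiagonal

variable {H : Type*} [NormedAddCommGroup H] [InnerProductSpace ℂ H] {A T S : H →L[ℂ] H}

theorem blk_apply_fst (P Q R S : H →L[ℂ] H) (x : WithLp 2 (H × H)) :
    (blk P Q R S x).fst = P x.fst + Q x.snd := rfl

theorem blk_apply_snd (P Q R S : H →L[ℂ] H) (x : WithLp 2 (H × H)) :
    (blk P Q R S x).snd = R x.fst + S x.snd := rfl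

theorem inner_AA_apply (A : H →L[ℂ] H) (x y : WithLp 2 (H × H)) :
    ⟪AA A x, y⟫_ℂ = ⟪A x.fst, y.fst⟫_ℂ + ⟪A x.snd, y.snd⟫_ℂ := by
  simp [AA, blk_apply_fst, blk_apply_snd, WithLp.prod_inner_apply]

theorem vnormA_AA_sq (hA : A.IsPositive) (x : WithLp 2 (H × H)) :
    vnormA (AA A) x ^ 2 = vnormA A x.fst ^ 2 + vnormA A x.snd ^ 2 := by
  rw [vnormA_sq hA, vnormA_sq hA, vnormA, inner_AA_apply, map_add,
    Real.sq_sqrt (add_nonneg (hA.re_inner_nonneg_left _) (hA.re_inner_nonneg_left _))]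

theorem inner_AA_blk_offDiag (A T S : H →L[ℂ] H) (x : WithLp 2 (H × H)) :
    ⟪AA A (blk 0 T S 0 x), x⟫_ℂ =
      ⟪A (T x.snd), x.fst⟫_ℂ + ⟪A (S x.fst), x.snd⟫_ℂ := by
  rw [inner_AA_apply, blk_apply_fst, blk_apply_snd]
  simp

theorem norm_inner_offDiag_le (hT : (A ∘L T).IsPositive) (hS : (A ∘L S).IsPositive) (u v : H) :
    ‖⟪A (T v), u⟫_ℂ + ⟪A (S u), v⟫_ℂ‖ ≤
      √(re ⟪A ((T + S) v), v⟫_ℂ) * √(re ⟪A ((T + S) u), u⟫_ℂ) := by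
  have hTvu := hT.norm_inner_le_sqrt_mul_sqrt v u
  have hSuv := hS.norm_inner_le_sqrt_mul_sqrt u v
  simp only [comp_apply] at hTvu hSuv
  have hsplit (w : H) :
      re ⟪A ((T + S) w), w⟫_ℂ = re ⟪A (T w), w⟫_ℂ + re ⟪A (S w), w⟫_ℂ := by
    rw [add_apply, map_add, inner_add_left, map_add]
  calc ‖⟪A (T v), u⟫_ℂ + ⟪A (S u), v⟫_ℂ‖
      ≤ √(re ⟪A (T v), v⟫_ℂ) * √(re ⟪A (T u), u⟫_ℂ)
        + √(re ⟪A (S v), v⟫_ℂ) * √(re ⟪A (S u), u⟫_ℂ) := by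
        linarith [norm_add_le ⟪A (T v), u⟫_ℂ ⟪A (S u), v⟫_ℂ]
    _ ≤ _ := by
        rw [hsplit, hsplit]
        exact Real.sqrt_mul_sqrt_add_sqrt_mul_sqrt_le (hT.re_inner_nonneg_left v)
          (hT.re_inner_nonneg_left u) (hS.re_inner_nonneg_left v) (hS.re_inner_nonneg_left u)

theorem norm_inner_AA_blk_offDiag_le (hA : A.IsPositive) (hT : (A ∘L T).IsPositive)
    (hS : (A ∘L S).IsPositive) {M : ℝ} (hM₀ : 0 ≤ M)
    (hM : ∀ y, vnormA A y = 1 → vnormA A ((T + S) y) ≤ M) {x : WithLp 2 (H × H)}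
    (hx : vnormA (AA A) x = 1) :
    ‖⟪AA A (blk 0 T S 0 x), x⟫_ℂ‖ ≤ 1 / 2 * M := by
  have hR := re_inner_le_mul_vnormA_sq_of_forall hA hM
  have hsum : vnormA A x.fst ^ 2 + vnormA A x.snd ^ 2 = 1 := by
    rw [← vnormA_AA_sq hA, hx, one_pow]
  have hu := vnormA_nonneg A x.fst
  have hv := vnormA_nonneg A x.snd
  rw [inner_AA_blk_offDiag]
  calc _ ≤ √(re ⟪A ((T + S) x.snd), x.snd⟫_ℂ) *
          √(re ⟪A ((T + S) x.fst), x.fst⟫_ℂ) := norm_inner_offDiag_le hT hS _ _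
    _ ≤ √(M * vnormA A x.snd ^ 2) * √(M * vnormA A x.fst ^ 2) := by
        gcongr <;> exact hR _
    _ = M * (vnormA A x.snd * vnormA A x.fst) := by
        rw [Real.sqrt_mul hM₀, Real.sqrt_mul hM₀, Real.sqrt_sq hu, Real.sqrt_sq hv]
        linear_combination vnormA A x.snd * vnormA A x.fst * Real.mul_self_sqrt hM₀
    _ ≤ 1 / 2 * M := by nlinarith [sq_nonneg (vnormA A x.fst - vnormA A x.snd)]

theorem re_inner_offDiag_eq (hS : (A ∘L S).IsSymmetric) (u v : H) :
    re (⟪A (T v), u⟫_ℂ + ⟪A (S u), v⟫_ℂ) = re ⟪A ((T + S) v), u⟫_ℂ := by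
  have hSuv : ⟪A (S u), v⟫_ℂ = ⟪u, A (S v)⟫_ℂ := hS u v
  rw [hSuv, map_add, inner_re_symm u, add_apply, map_add, inner_add_left, map_add]

theorem exists_vnormA_AA_eq_one_le_norm_inner (hA : A.IsPositive) (hS : (A ∘L S).IsSymmetric)
    {y : H} (hy : vnormA A y = 1) :
    ∃ x : WithLp 2 (H × H), vnormA (AA A) x = 1 ∧
      1 / 2 * vnormA A ((T + S) y) ≤ ‖⟪AA A (blk 0 T S 0 x), x⟫_ℂ‖ := by
  have unit_of_sq {x : WithLp 2 (H × H)}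
      (hx : vnormA A x.fst ^ 2 + vnormA A x.snd ^ 2 = 1) : vnormA (AA A) x = 1 := by
    rw [← vnormA_AA_sq hA] at hx
    exact (pow_eq_one_iff_of_nonneg (vnormA_nonneg _ x) two_ne_zero).1 hx
  set b := vnormA A ((T + S) y)
  rcases eq_or_ne b 0 with hb | hb
  · refine ⟨WithLp.toLp 2 (y, 0), unit_of_sq ?_, by simp [hb]⟩
    rw [WithLp.toLp_fst, WithLp.toLp_snd, hy]
    simp [vnormA]
  set u : H := ((b⁻¹ : ℝ) : ℂ) • (T + S) y
  have hu : vnormA A u = 1 := vnormA_inv_smul_self hb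
  set s : ℝ := √(1 / 2)
  have hs : s ^ 2 = 1 / 2 := Real.sq_sqrt (by norm_num)
  refine ⟨WithLp.toLp 2 ((s : ℂ) • u, (s : ℂ) • y), unit_of_sq ?_, ?_⟩
  · simp only [WithLp.toLp_fst, WithLp.toLp_snd, vnormA_ofReal_smul, hu, hy]
    rw [mul_one, sq_abs, hs]
    norm_num
  have hre : re (⟪A (T y), u⟫_ℂ + ⟪A (S u), y⟫_ℂ) = b := by
    rw [re_inner_offDiag_eq hS, inner_smul_right, re_to_complex,
      Complex.re_ofReal_mul, ← re_to_complex, ← vnormA_sq hA]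
    change b⁻¹ * b ^ 2 = b
    field_simp
  have hscale : ⟪AA A (blk 0 T S 0 (WithLp.toLp 2 ((s : ℂ) • u, (s : ℂ) • y))),
      WithLp.toLp 2 ((s : ℂ) • u, (s : ℂ) • y)⟫_ℂ =
      ((s ^ 2 : ℝ) : ℂ) * (⟪A (T y), u⟫_ℂ + ⟪A (S u), y⟫_ℂ) := by
    simp only [inner_AA_blk_offDiag, WithLp.toLp_fst, WithLp.toLp_snd, map_smul,
      inner_smul_left, inner_smul_right, Complex.conj_ofReal]
    push_cast
    ring
  rw [hscale, norm_mul, Complex.norm_real, Real.norm_of_nonneg (sq_nonneg s), hs, ← hre]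
  exact mul_le_mul_of_nonneg_left (re_le_norm _) (by norm_num)

end offDiagonal

theorem stmt5_general {H : Type*} [NormedAddCommGroup H] [InnerProductSpace ℂ H]
    (A : H →L[ℂ] H) (hA : A.IsPositive)
    (T S : H →L[ℂ] H) (hT : (A ∘L T).IsPositive) (hS : (A ∘L S).IsPositive) :
    wA (AA A) (blk 0 T S 0) = (1 / 2) * opNormA A (T + S) := by
  refine Real.sSup_eq_mul_sSup_of_forall_exists_le (by norm_num) ?_ ?_ ?_ ?_
  · rintro _ ⟨x, -, rfl⟩
    exact norm_nonneg _
  · rintro _ ⟨y, -, rfl⟩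
    exact vnormA_nonneg _ _
  · rintro M hM₀ hM _ ⟨x, hx, rfl⟩
    exact norm_inner_AA_blk_offDiag_le hA hT hS hM₀ (fun y hy => hM ⟨y, hy, rfl⟩) hx
  · rintro _ ⟨y, hy, rfl⟩
    obtain ⟨x, hx, hle⟩ := exists_vnormA_AA_eq_one_le_norm_inner (T := T) hA hS.isSymmetric hy
    exact ⟨_, ⟨x, hx, rfl⟩, hle⟩

theorem stmt5 {H : Type*} [NormedAddCommGroup H] [InnerProductSpace ℂ H] [CompleteSpace H]
    (A : H →L[ℂ] H) (hA : A.IsPositive)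
    (T S : H →L[ℂ] H) (hT : (A ∘L T).IsPositive) (hS : (A ∘L S).IsPositive) :
    wA (AA A) (blk 0 T S 0) = (1 / 2) * opNormA A (T + S) :=
  stmt5_general A hA T S hT hS
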